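/- Let 0 < p < 1/2, q = 1 − p, and for k ≥ 0 let A_k be the (k+1)×(k+1) weak-reflection matrix. Define Q_k(z) = det(B_k(z)) for k ≥ 0, where B_k(z) is the matrix I − z A_k with its first row (index 0) replaced by the all-ones row vector, and set Q_{−1}(z) = 0. Then Q_0(z) = 1 and for all k ≥ 1, Q_k(z) = Q_{k−1}(z) − p q z² Q_{k−2}(z) + p^k z^k. -/
import Mathlib


open Matrix

/-- The `(k+1) × (k+1)` weak-reflection matrix: nonzero entries are
`A(0,0) = 1-p`, `A(i,i-1) = p` for `1 ≤ i ≤ k`, `A(i,i+1) = 1-p` for `0 ≤ i ≤ k-1`. -/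
noncomputable def weakA (p : ℝ) (k : ℕ) : Matrix (Fin (k + 1)) (Fin (k + 1)) ℝ :=
  fun i j =>
    if (i : ℕ) = 0 ∧ (j : ℕ) = 0 then 1 - p
    else if (j : ℕ) + 1 = (i : ℕ) then p
    else if (i : ℕ) + 1 = (j : ℕ) then 1 - p
    else 0

/-- Index-shifted numerators for the weak scenario: `Qdet p z (k+1)` is `Q_k(z)`,
namely `Q_{-1}(z) = 0` and, for `k ≥ 0`, `Q_k(z) = det B_k(z)` where `B_k(z)` is
`I - z A_k` with its first row replaced by the all-ones row. -/
noncomputable def Qdet (p z : ℝ) : ℕ → ℝ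
  | 0 => 0
  | j + 1 => ((1 - z • weakA p j).updateRow 0 (fun _ => 1)).det

noncomputable def triM (p z : ℝ) (k : ℕ) : Matrix (Fin k) (Fin k) ℝ :=
  fun i j =>
    if (i : ℕ) = j then 1
    else if (j : ℕ) + 1 = (i : ℕ) then -(z * p)
    else if (i : ℕ) + 1 = (j : ℕ) then -(z * (1 - p))
    else 0

noncomputable def dd (p z : ℝ) (k : ℕ) : ℝ := (triM p z k).det

lemma succAbove_one_coe (n : ℕ) (r : Fin (n+1)) :
    (((1 : Fin (n+2)).succAbove r : Fin (n+2)) : ℕ) = if (r:ℕ) = 0 then 0 else (r:ℕ) + 1 := by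
  simp only [Fin.succAbove, Fin.lt_def]
  split_ifs <;> simp_all <;> omega

lemma dd_zero (p z : ℝ) : dd p z 0 = 1 := by
  simp [dd, Matrix.det_isEmpty]

lemma dd_one (p z : ℝ) : dd p z 1 = 1 := by
  simp [dd, Matrix.det_fin_one, triM]

lemma dd_rec (p z : ℝ) (k : ℕ) :
    dd p z (k + 2) = dd p z (k + 1) - (z * p) * (z * (1 - p)) * dd p z k := by
  have hz0 : ∀ j : Fin k, triM p z (k+2) 0 j.succ.succ = 0 := by
    intro j
    simp [triM, Fin.val_succ]
  have e0 : triM p z (k+2) 0 0 = 1 := by simp [triM]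
  have e1 : triM p z (k+2) 0 1 = -(z * (1-p)) := by simp [triM]
  have h1 : (triM p z (k+2)).submatrix Fin.succ Fin.succ = triM p z (k+1) := by
    ext i j
    simp only [Matrix.submatrix_apply, triM, Fin.val_succ]
    split_ifs <;> first | rfl | omega
  have h2 : ((triM p z (k+2)).submatrix Fin.succ (Fin.succAbove 1)).submatrix Fin.succ Fin.succ
      = triM p z k := by
    ext i j
    have hi := i.isLt; have hj := j.isLt
    simp only [Matrix.submatrix_apply, triM, succAbove_one_coe, Fin.val_succ]
    rw [if_neg (Nat.succ_ne_zero _)]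
    split_ifs <;> first | rfl | omega
  have hN : ((triM p z (k+2)).submatrix Fin.succ (Fin.succAbove 1)).det
      = -(z * p) * dd p z k := by
    have hc0 : ∀ i : Fin k,
        ((triM p z (k+2)).submatrix Fin.succ (Fin.succAbove 1)) i.succ 0 = 0 := by
      intro i
      have hi := i.isLt
      simp only [Matrix.submatrix_apply, triM, succAbove_one_coe, Fin.val_succ,
        Fin.val_zero, if_pos rfl, if_true]
      split_ifs <;> first | rfl | omega | exact False.elim ‹False›
    have hc1 : ((triM p z (k+2)).submatrix Fin.succ (Fin.succAbove 1)) 0 0 = -(z * p) := by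
      simp only [Matrix.submatrix_apply, triM, succAbove_one_coe, Fin.val_zero,
        Fin.val_succ, if_pos rfl]
      norm_num
    rw [Matrix.det_succ_column_zero, Fin.sum_univ_succ]
    simp only [hc0, hc1, mul_zero, zero_mul, Finset.sum_const_zero, add_zero,
      Fin.val_zero, pow_zero, one_mul, Fin.succAbove_zero, h2]
    simp [dd]
  rw [show dd p z (k+2) = (triM p z (k+2)).det from rfl, Matrix.det_succ_row_zero,
    Fin.sum_univ_succ, Fin.sum_univ_succ]
  simp only [Fin.succ_zero_eq_one, hz0, mul_zero, zero_mul, Finset.sum_const_zero, add_zero,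
    e0, e1, Fin.val_zero, Fin.val_one, pow_zero, pow_one, one_mul, Fin.succAbove_zero, h1, hN]
  show dd p z (k+1) + -1 * -(z * (1-p)) * (-(z*p) * dd p z k) = _
  ring

lemma Qdet_succ (p z : ℝ) (k : ℕ) :
    Qdet p z (k + 1) = dd p z k + (z * p) * Qdet p z k := by
  cases k with
  | zero =>
    show ((1 - z • weakA p 0).updateRow 0 (fun _ => 1)).det = dd p z 0 + (z*p) * 0
    rw [Matrix.det_fin_one, dd_zero]
    simp [Matrix.updateRow_apply]
  | succ k =>
    set B : Matrix (Fin (k+2)) (Fin (k+2)) ℝ :=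
      (1 - z • weakA p (k+1)).updateRow 0 (fun _ => 1) with hB
    have hb00 : B 0 0 = 1 := by simp [hB, Matrix.updateRow_apply]
    have hb10 : B 1 0 = -(z * p) := by
      simp [hB, Matrix.updateRow_apply, Matrix.sub_apply, Matrix.one_apply, weakA,
        Fin.ext_iff]
    have hbs0 : ∀ i : Fin k, B i.succ.succ 0 = 0 := by
      intro i
      have : ((i.succ.succ : Fin (k+2)) : ℕ) = (i : ℕ) + 2 := by simp
      simp [hB, Matrix.updateRow_apply, Matrix.sub_apply, Matrix.one_apply, weakA,
        Fin.ext_iff, this]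
    have h1 : B.submatrix Fin.succ Fin.succ = triM p z (k+1) := by
      ext i j
      simp only [Matrix.submatrix_apply, hB, Matrix.updateRow_apply, Matrix.sub_apply,
        Matrix.one_apply, Matrix.smul_apply, weakA, smul_eq_mul, triM,
        if_neg (Fin.succ_ne_zero i), Fin.ext_iff, Fin.val_succ, Fin.val_zero,
        Nat.succ_ne_zero, false_and, if_false]
      split_ifs
      any_goals ring
      any_goals omega
      all_goals (exfalso; omega)
    have h2 : B.submatrix (Fin.succAbove 1) Fin.succ
        = (1 - z • weakA p k).updateRow 0 (fun _ => 1) := by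
      ext r c
      refine Fin.cases ?_ (fun i => ?_) r
      · have : (Fin.succAbove (1 : Fin (k+2)) 0) = 0 := by
          ext; rw [succAbove_one_coe]; simp
        simp [Matrix.submatrix_apply, this, hB, Matrix.updateRow_apply]
      · have hv : ((Fin.succAbove (1 : Fin (k+2)) i.succ : Fin (k+2)) : ℕ) = (i : ℕ) + 2 := by
          rw [succAbove_one_coe]; simp
        have hne : (Fin.succAbove (1 : Fin (k+2)) i.succ) ≠ 0 := by
          simp [Fin.ext_iff, hv]
        simp only [Matrix.submatrix_apply, hB, Matrix.updateRow_apply,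
          if_neg hne, if_neg (Fin.succ_ne_zero i), Matrix.sub_apply, Matrix.one_apply,
          Matrix.smul_apply, weakA, smul_eq_mul, Fin.ext_iff, Fin.val_succ, hv,
          Fin.val_zero, Nat.succ_ne_zero, false_and, if_false]
        split_ifs
        any_goals ring
        any_goals omega
        all_goals (exfalso; omega)
    have hQ : (B.submatrix (Fin.succAbove 1) Fin.succ).det = Qdet p z (k+1) := by
      rw [h2]; rfl
    show B.det = _
    rw [Matrix.det_succ_column_zero, Fin.sum_univ_succ, Fin.sum_univ_succ]
    simp only [Fin.succ_zero_eq_one, hbs0, mul_zero, zero_mul, Finset.sum_const_zero,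
      add_zero, hb00, hb10, Fin.val_zero, Fin.val_one, pow_zero, pow_one, one_mul,
      Fin.succAbove_zero, h1, hQ]
    have hdd : (triM p z (k+1)).det = dd p z (k+1) := rfl
    rw [hdd]
    ring

lemma Qdet_one (p z : ℝ) : Qdet p z 1 = 1 := by
  have h := Qdet_succ p z 0
  have h0 : Qdet p z 0 = 0 := rfl
  rw [h0, dd_zero] at h
  linarith [h]

/-- `Q_0(z) = 1` and `Q_k(z) = Q_{k-1}(z) - p q z² Q_{k-2}(z) + p^k z^k` for all `k ≥ 1`
(indices shifted by one: `Qdet p z (k+1) = Q_k(z)`). -/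
theorem weak_Q_recursion (p q : ℝ) (hp0 : 0 < p) (hp : p < 1 / 2) (hq : q = 1 - p)
    (z : ℝ) :
    Qdet p z 1 = 1 ∧
    ∀ k : ℕ, 1 ≤ k →
      Qdet p z (k + 1) =
        Qdet p z k - p * q * z ^ 2 * Qdet p z (k - 1) + p ^ k * z ^ k := by
  subst hq
  refine ⟨Qdet_one p z, ?_⟩
  intro k hk
  induction k, hk using Nat.le_induction with
  | base =>
    have h1 := Qdet_succ p z 1
    have h0 : Qdet p z 0 = 0 := rfl
    rw [dd_one, Qdet_one] at h1
    simp only [h0, Qdet_one, pow_one]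
    rw [h1]; ring
  | succ k hk ih =>
    obtain ⟨m, rfl⟩ : ∃ m, k = m + 1 := ⟨k - 1, (Nat.succ_pred_eq_of_pos hk).symm⟩
    simp only [Nat.add_sub_cancel] at ih ⊢
    have E1 := Qdet_succ p z (m + 2)
    have E2 := Qdet_succ p z (m + 1)
    have E3 := Qdet_succ p z m
    have E4 := dd_rec p z m
    linear_combination E1 + E4 - E2 + z^2*p*(1-p)*E3 + z*p*ih
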